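/- arXiv:0807.2648 — 3 statements merged into one kernel-verified Lean document; each statement's English description precedes it below -/
import Mathlib

section
/- For a double-integrator robot with speed bound v_max > 0 and acceleration bound u_max > 0, starting from any configuration g = (p, v) ∈ ℝ² × ℝ² with ‖v‖ = v₀ ≤ v_max, the two-dimensional Lebesgue measure of the reachable set satisfies Area(R_t(g)) ≤ 2 v₀ u_max t³ + u_max² t⁴ for every t ≥ 0. (In particular, for v₀ = 0 one has Area(R_t(g)) ≤ u_max² t⁴.) -/
open MeasureTheory Filter Topology Real

noncomputable section

/-- The plane `ℝ²` with the Euclidean norm. -/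
abbrev Plane : Type := EuclideanSpace ℝ (Fin 2)

/-- A double-integrator (DI) trajectory with speed bound `vmax` and acceleration bound
`umax`: a twice continuously differentiable curve in the plane whose velocity and
acceleration are bounded by `vmax` and `umax` respectively. -/
def IsDITraj (vmax umax : ℝ) (x : ℝ → Plane) : Prop :=
  ContDiff ℝ 2 x ∧ (∀ t, ‖deriv x t‖ ≤ vmax) ∧ (∀ t, ‖deriv (deriv x) t‖ ≤ umax)

/-- Minimum travel time of a DI robot from configuration `(p, v)` to the point `q`. -/
def tauDI (vmax umax : ℝ) (p v q : Plane) : ℝ :=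
  sInf {T : ℝ | 0 ≤ T ∧ ∃ x : ℝ → Plane, IsDITraj vmax umax x ∧
    x 0 = p ∧ deriv x 0 = v ∧ x T = q}

/-- Reachable set at time `t` of a DI robot starting at configuration `(p, v)`. -/
def reachDI (vmax umax : ℝ) (p v : Plane) (t : ℝ) : Set Plane :=
  {q | tauDI vmax umax p v q ≤ t}

/-!
A point reached at time `T` by a DI trajectory from `(p, v)` satisfies the Taylor estimate
`‖q - p - T • v‖ ≤ u_max T² / 2`. Hence every point of `R_t(g)` lies within `u_max s² / 2` of the
segment `[p, p + s v]` for each `s > t`, and that neighbourhood fits in a rectangle with sides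
`v₀ s + u_max s²` (along `v`) and `u_max s²` (across `v`). Letting `s → t` bounds the area by
`v₀ u_max t³ + u_max² t⁴`.
-/

open Set Metric Module RealInnerProductSpace
open scoped ContDiff


section Taylor

variable {E : Type*} [NormedAddCommGroup E] [NormedSpace ℝ E]

theorem norm_sub_sub_smul_deriv_le {x : ℝ → E} {u T : ℝ} (hx : Differentiable ℝ x)
    (hx' : Differentiable ℝ (deriv x)) (hacc : ∀ t, ‖deriv (deriv x) t‖ ≤ u) (hT : 0 ≤ T) :
    ‖x T - x 0 - T • deriv x 0‖ ≤ u * T ^ 2 / 2 := by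
  have hvel : ∀ s, 0 ≤ s → ‖deriv x s - deriv x 0‖ ≤ u * s := fun s hs => by
    simpa [abs_of_nonneg hs] using
      convex_univ.norm_image_sub_le_of_norm_deriv_le (fun y _ => hx' y) (fun y _ => hacc y)
        (mem_univ 0) (mem_univ s)
  refine image_norm_le_of_norm_deriv_right_le_deriv_boundary (a := 0) (b := T)
    (f := fun s => x s - x 0 - s • deriv x 0) (f' := fun s => deriv x s - deriv x 0)
    (B := fun s => u * s ^ 2 / 2) (B' := fun s => u * s) (by have := hx.continuous; fun_prop)
    (fun s _ => ?_) (by simp) (fun s => ?_) (fun s hs => hvel s hs.1) ⟨hT, le_rfl⟩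
  · exact (((hx s).hasDerivAt.sub_const _).sub
      ((hasDerivAt_id s).smul_const _)).hasDerivWithinAt.congr_deriv (by simp)
  · exact (((hasDerivAt_pow 2 s).const_mul u).div_const 2).congr_deriv (by norm_num; ring)

end Taylor

theorem deriv_smoothTransition_eq_zero {s : ℝ} (hs : s ∉ Ioo 0 1) :
    deriv smoothTransition s = 0 := by
  rcases le_or_gt s 0 with h | h
  · refine IsLocalMin.deriv_eq_zero (.of_forall fun y => ?_)
    rw [smoothTransition.zero_of_nonpos h]
    exact smoothTransition.nonneg y
  · refine IsLocalMax.deriv_eq_zero (.of_forall fun y => ?_)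
    rw [smoothTransition.one_of_one_le (not_lt.1 fun h' => hs ⟨h, h'⟩)]
    exact smoothTransition.le_one y

theorem deriv_deriv_smoothTransition_eq_zero {s : ℝ} (hs : s ∉ Ioo 0 1) :
    deriv (deriv smoothTransition) s = 0 :=
  IsLocalMin.deriv_eq_zero (.of_forall fun _ => by
    rw [deriv_smoothTransition_eq_zero hs]
    exact smoothTransition.monotone.deriv_nonneg)

theorem exists_norm_deriv_smoothTransition_le :
    ∃ C, ∀ s, ‖deriv smoothTransition s‖ ≤ C ∧ ‖deriv (deriv smoothTransition) s‖ ≤ C := by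
  have hcd : ContDiff ℝ ∞ (deriv smoothTransition) :=
    (contDiff_infty_iff_deriv.1 smoothTransition.contDiff).2
  have hsupp {f : ℝ → ℝ} (hf : ∀ s ∉ Ioo 0 1, f s = 0) : HasCompactSupport f :=
    .intro isCompact_Icc fun s hs => hf s fun h => hs (Ioo_subset_Icc_self h)
  obtain ⟨C₁, hC₁⟩ := (hsupp fun _ => deriv_smoothTransition_eq_zero).exists_bound_of_continuous
    hcd.continuous
  obtain ⟨C₂, hC₂⟩ :=
    (hsupp fun _ => deriv_deriv_smoothTransition_eq_zero).exists_bound_of_continuous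
      (hcd.continuous_deriv (by simp))
  exact ⟨max C₁ C₂, fun s => ⟨(hC₁ s).trans (le_max_left _ _), (hC₂ s).trans (le_max_right _ _)⟩⟩

/-- Position of a particle that starts at unit speed and brakes smoothly to rest by time `1`. -/
def brake (s : ℝ) : ℝ := ∫ r in 0..s, (1 - smoothTransition r)

theorem hasDerivAt_brake (s : ℝ) : HasDerivAt brake (1 - smoothTransition s) s :=
  ((continuous_const.sub smoothTransition.continuous).integral_hasStrictDerivAt 0 s).hasDerivAt

theorem deriv_brake : deriv brake = fun s => 1 - smoothTransition s :=
  funext fun s => (hasDerivAt_brake s).deriv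

theorem contDiff_brake : ContDiff ℝ ∞ brake :=
  contDiff_infty_iff_deriv.2 ⟨fun s => (hasDerivAt_brake s).differentiableAt,
    deriv_brake ▸ contDiff_const.sub smoothTransition.contDiff⟩

theorem brake_zero : brake 0 = 0 := intervalIntegral.integral_same

theorem brake_eq_brake_one {s : ℝ} (hs : 1 ≤ s) : brake s = brake 1 :=
  constant_of_has_deriv_right_zero contDiff_brake.continuous.continuousOn
    (fun r hr => (hasDerivAt_brake r).hasDerivWithinAt.congr_deriv
      (by simp [smoothTransition.one_of_one_le hr.1])) s ⟨hs, le_rfl⟩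

section Steering

variable {E : Type*} [NormedAddCommGroup E] [NormedSpace ℝ E]

def profileCurve (φ : ℝ → ℝ) (c l : ℝ) (w : E) (t : ℝ) : E := φ ((t - c) / l) • w

theorem hasDerivAt_profileCurve {φ : ℝ → ℝ} (hφ : Differentiable ℝ φ) (c l : ℝ) (w : E)
    (t : ℝ) : HasDerivAt (profileCurve φ c l w) (profileCurve (deriv φ) c l (l⁻¹ • w) t) t := by
  have := ((hφ _).hasDerivAt.comp t (((hasDerivAt_id t).sub_const c).div_const l)).smul_const w
  exact this.congr_deriv (by simp [profileCurve, smul_smul, div_eq_mul_inv])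

theorem ContDiff.profileCurve {φ : ℝ → ℝ} {n : WithTop ℕ∞} (hφ : ContDiff ℝ n φ) (c l : ℝ)
    (w : E) : ContDiff ℝ n (profileCurve φ c l w) :=
  (hφ.comp ((contDiff_id.sub contDiff_const).div_const l)).smul contDiff_const

theorem norm_smul_inv_smul_le {a C K T : ℝ} {w : E} (ha : ‖a‖ ≤ C) (hT : 0 < T)
    (hw : C * ‖w‖ ≤ K * T) : ‖a • T⁻¹ • w‖ ≤ K := by
  rw [norm_smul, norm_smul, norm_inv, Real.norm_of_nonneg hT.le]
  calc ‖a‖ * (T⁻¹ * ‖w‖) ≤ C * (T⁻¹ * ‖w‖) := by gcongr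
    _ = C * ‖w‖ / T := by ring
    _ ≤ K := (div_le_iff₀ hT).2 hw

/-- Brakes from velocity `v` to rest during `[0, T₁]`, then travels by `d` during
`[T₁, T₁ + T₂]`; at every time only one of the two phases contributes to the derivatives. -/
def brakeThenMove (T₁ T₂ : ℝ) (p v d : E) (t : ℝ) : E :=
  p + (profileCurve brake 0 T₁ (T₁ • v) t + profileCurve smoothTransition T₁ T₂ d t)

variable {T₁ T₂ : ℝ} {p v d : E}

theorem contDiff_brakeThenMove : ContDiff ℝ ∞ (brakeThenMove T₁ T₂ p v d) :=
  contDiff_const.add ((contDiff_brake.profileCurve _ _ _).add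
    (smoothTransition.contDiff.profileCurve _ _ _))

theorem deriv_brakeThenMove (hT₁ : T₁ ≠ 0) :
    deriv (brakeThenMove T₁ T₂ p v d) = fun t => profileCurve (deriv brake) 0 T₁ v t +
      profileCurve (deriv smoothTransition) T₁ T₂ (T₂⁻¹ • d) t := by
  refine funext fun t => HasDerivAt.deriv ?_
  have h₁ := hasDerivAt_profileCurve (contDiff_brake.differentiable (by simp)) 0 T₁ (T₁ • v) t
  rw [inv_smul_smul₀ hT₁] at h₁
  exact (h₁.add (hasDerivAt_profileCurve
    ((smoothTransition.contDiff (n := 1)).differentiable one_ne_zero) T₁ T₂ d t)).const_add p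

theorem deriv_deriv_brakeThenMove (hT₁ : T₁ ≠ 0) :
    deriv (deriv (brakeThenMove T₁ T₂ p v d)) = fun t =>
      profileCurve (deriv (deriv brake)) 0 T₁ (T₁⁻¹ • v) t +
        profileCurve (deriv (deriv smoothTransition)) T₁ T₂ (T₂⁻¹ • T₂⁻¹ • d) t := by
  have h₁ := (contDiff_infty_iff_deriv.1 contDiff_brake).2.differentiable (by simp)
  have h₂ := (contDiff_infty_iff_deriv.1 smoothTransition.contDiff).2.differentiable (by simp)
  rw [deriv_brakeThenMove hT₁]
  exact funext fun t => ((hasDerivAt_profileCurve h₁ 0 T₁ v t).add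
    (hasDerivAt_profileCurve h₂ T₁ T₂ (T₂⁻¹ • d) t)).deriv

theorem brakeThenMove_zero (hT₁ : 0 ≤ T₁) (hT₂ : 0 ≤ T₂) : brakeThenMove T₁ T₂ p v d 0 = p := by
  simp [brakeThenMove, profileCurve, brake_zero,
    smoothTransition.zero_of_nonpos (div_nonpos_of_nonpos_of_nonneg (neg_nonpos.2 hT₁) hT₂)]

theorem deriv_brakeThenMove_zero (hT₁ : 0 < T₁) (hT₂ : 0 ≤ T₂) :
    deriv (brakeThenMove T₁ T₂ p v d) 0 = v := by
  have : -T₁ / T₂ ∉ Ioo 0 1 := fun h =>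
    (div_nonpos_of_nonpos_of_nonneg (neg_nonpos.2 hT₁.le) hT₂).not_gt h.1
  simp [deriv_brakeThenMove hT₁.ne', profileCurve, deriv_brake, deriv_smoothTransition_eq_zero this]

theorem brakeThenMove_add (hT₁ : 0 < T₁) (hT₂ : 0 < T₂) :
    brakeThenMove T₁ T₂ p v d (T₁ + T₂) = p + (T₁ * brake 1) • v + d := by
  have : 1 ≤ (T₁ + T₂ - 0) / T₁ := by
    rw [sub_zero, le_div_iff₀ hT₁]
    linarith
  rw [brakeThenMove, profileCurve, profileCurve, brake_eq_brake_one this, add_sub_cancel_left,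
    div_self hT₂.ne', smoothTransition.one, one_smul, smul_smul, mul_comm, add_assoc]

theorem norm_deriv_brakeThenMove_le {C vmax : ℝ} (hC : ∀ s, ‖deriv smoothTransition s‖ ≤ C)
    (hT₁ : 0 < T₁) (hT₂ : 0 < T₂) (hv : ‖v‖ ≤ vmax) (hd : C * ‖d‖ ≤ vmax * T₂) (t : ℝ) :
    ‖deriv (brakeThenMove T₁ T₂ p v d) t‖ ≤ vmax := by
  rw [deriv_brakeThenMove hT₁.ne']
  rcases le_total t T₁ with ht | ht
  · have hmove : (t - T₁) / T₂ ∉ Ioo 0 1 := fun h =>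
      (div_nonpos_of_nonpos_of_nonneg (sub_nonpos.2 ht) hT₂.le).not_gt h.1
    have hbrake : ‖1 - smoothTransition ((t - 0) / T₁)‖ ≤ 1 := by
      rw [Real.norm_eq_abs, abs_le]
      constructor <;> linarith [smoothTransition.nonneg ((t - 0) / T₁),
        smoothTransition.le_one ((t - 0) / T₁)]
    simp only [profileCurve, deriv_smoothTransition_eq_zero hmove, zero_smul, add_zero,
      deriv_brake, norm_smul]
    simpa using mul_le_mul hbrake hv (norm_nonneg _) zero_le_one
  · have hbrake : 1 ≤ (t - 0) / T₁ := by
      rw [sub_zero, le_div_iff₀ hT₁]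
      linarith
    simp only [profileCurve, deriv_brake, smoothTransition.one_of_one_le hbrake, sub_self,
      zero_smul, zero_add]
    exact norm_smul_inv_smul_le (hC _) hT₂ hd

theorem norm_deriv_deriv_brakeThenMove_le {C umax : ℝ}
    (hC₁ : ∀ s, ‖deriv smoothTransition s‖ ≤ C) (hC₂ : ∀ s, ‖deriv (deriv smoothTransition) s‖ ≤ C)
    (hT₁ : 0 < T₁) (hT₂ : 0 < T₂) (hv : C * ‖v‖ ≤ umax * T₁) (hd : C * ‖d‖ ≤ umax * (T₂ * T₂))
    (t : ℝ) : ‖deriv (deriv (brakeThenMove T₁ T₂ p v d)) t‖ ≤ umax := by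
  have hbrake : deriv (deriv brake) = fun s => -deriv smoothTransition s := by
    rw [deriv_brake]
    exact funext fun s => deriv_const_sub 1
  rw [deriv_deriv_brakeThenMove hT₁.ne', hbrake]
  rcases le_total t T₁ with ht | ht
  · have hmove : (t - T₁) / T₂ ∉ Ioo 0 1 := fun h =>
      (div_nonpos_of_nonpos_of_nonneg (sub_nonpos.2 ht) hT₂.le).not_gt h.1
    simp only [profileCurve, deriv_deriv_smoothTransition_eq_zero hmove, zero_smul, add_zero]
    exact norm_smul_inv_smul_le (by rw [norm_neg]; exact hC₁ _) hT₁ hv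
  · have hstop : (t - 0) / T₁ ∉ Ioo 0 1 := fun h => h.2.not_ge (by
      rw [sub_zero, le_div_iff₀ hT₁]
      linarith)
    simp only [profileCurve, deriv_smoothTransition_eq_zero hstop, neg_zero, zero_smul, zero_add]
    rw [smul_smul (T₂⁻¹), ← mul_inv]
    exact norm_smul_inv_smul_le (hC₂ _) (mul_pos hT₂ hT₂) hd

end Steering

section Box

variable {ι F : Type*} [Fintype ι] [NormedAddCommGroup F] [InnerProductSpace ℝ F]
  [FiniteDimensional ℝ F]

theorem exists_orthonormalBasis_fin_succ_smul_eq {n : ℕ} (hF : finrank ℝ F = n + 1) (w : F) :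
    ∃ b : OrthonormalBasis (Fin (n + 1)) ℝ F, w = ‖w‖ • b 0 := by
  have : Nontrivial F := Module.nontrivial_of_finrank_eq_succ hF
  obtain ⟨u, hu, hwu⟩ : ∃ u : F, ‖u‖ = 1 ∧ w = ‖w‖ • u := by
    rcases eq_or_ne w 0 with rfl | hw
    · obtain ⟨u, hu⟩ := exists_norm_eq F zero_le_one
      exact ⟨u, hu, by simp⟩
    · exact ⟨‖w‖⁻¹ • w, norm_smul_inv_norm hw, by rw [smul_inv_smul₀ (norm_ne_zero_iff.2 hw)]⟩
  have hu' : Orthonormal ℝ (({0} : Set (Fin (n + 1))).domRestrict fun _ => u) :=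
    ⟨fun _ => hu, fun i j hij => (hij (Subsingleton.elim i j)).elim⟩
  obtain ⟨b, hb⟩ := hu'.exists_orthonormalBasis_extension_of_card_eq (by simpa using hF)
  exact ⟨b, by rw [hb 0 rfl, ← hwu]⟩

variable [MeasurableSpace F] [BorelSpace F]

theorem OrthonormalBasis.volume_setOf_inner_mem_Icc (b : OrthonormalBasis ι ℝ F)
    (lo hi : ι → ℝ) :
    volume {x : F | ∀ i, ⟪b i, x⟫ ∈ Icc (lo i) (hi i)} = ∏ i, ENNReal.ofReal (hi i - lo i) := by
  have hb : MeasurePreserving (fun x : F => WithLp.ofLp (b.repr x)) volume volume :=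
    (PiLp.volume_preserving_ofLp ι).comp b.measurePreserving_repr
  have hset : {x : F | ∀ i, ⟪b i, x⟫ ∈ Icc (lo i) (hi i)} =
      (fun x : F => WithLp.ofLp (b.repr x)) ⁻¹' Icc lo hi := by
    ext x
    simp [b.repr_apply_apply, Pi.le_def, forall_and]
  rw [hset, hb.measure_preimage measurableSet_Icc.nullMeasurableSet, Real.volume_Icc_pi]

theorem volume_cthickening_segment_le {n : ℕ} (hF : finrank ℝ F = n + 1) (x y : F) {ρ : ℝ}
    (hρ : 0 ≤ ρ) :
    volume (cthickening ρ (segment ℝ x y)) ≤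
      ENNReal.ofReal (dist x y + 2 * ρ) * ENNReal.ofReal (2 * ρ) ^ n := by
  obtain ⟨b, hb⟩ := exists_orthonormalBasis_fin_succ_smul_eq hF (y - x)
  have hinner : ∀ i, ⟪b i, y - x⟫ = if i = 0 then dist x y else 0 := by
    intro i
    rw [hb, real_inner_smul_right, b.inner_eq_ite, dist_eq_norm']
    split_ifs <;> simp
  have hsub : cthickening ρ (segment ℝ x y) ⊆
      {q | ∀ i, ⟪b i, q⟫ ∈ Icc (⟪b i, x⟫ - ρ) (⟪b i, y⟫ + ρ)} := by
    rw [segment_eq_image',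
      (isCompact_Icc.image (by fun_prop)).cthickening_eq_biUnion_closedBall hρ]
    simp only [mem_image, iUnion_exists, biUnion_and', iUnion_iUnion_eq_right, iUnion_subset_iff]
    intro θ hθ q hq i
    have hqz : |⟪b i, q - (x + θ • (y - x))⟫| ≤ ρ :=
      (abs_real_inner_le_norm _ _).trans (by simpa [b.orthonormal.1 i, ← dist_eq_norm] using hq)
    have hyx : 0 ≤ ⟪b i, y - x⟫ := by rw [hinner]; split_ifs <;> simp [dist_nonneg]
    simp only [inner_sub_right, inner_add_right, real_inner_smul_right] at hqz hyx
    constructor <;>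
      nlinarith [abs_le.1 hqz, mul_nonneg hθ.1 hyx, mul_nonneg (sub_nonneg.2 hθ.2) hyx]
  calc volume (cthickening ρ (segment ℝ x y))
      ≤ ∏ i, ENNReal.ofReal (⟪b i, y⟫ + ρ - (⟪b i, x⟫ - ρ)) :=
        (measure_mono hsub).trans (b.volume_setOf_inner_mem_Icc _ _).le
    _ = ENNReal.ofReal (dist x y + 2 * ρ) * ENNReal.ofReal (2 * ρ) ^ n := by
        simp_rw [show ∀ i, ⟪b i, y⟫ + ρ - (⟪b i, x⟫ - ρ) = ⟪b i, y - x⟫ + 2 * ρ by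
          intro i; rw [inner_sub_right]; ring, hinner]
        simp [Fin.prod_univ_succ, Fin.succ_ne_zero]

end Box

/-- Every point is reachable; otherwise `tauDI` would be the junk value `sInf ∅ = 0`. The time
scales `T₁` and `T₂` are chosen so long that the rescaled profiles respect both bounds. -/
theorem exists_isDITraj_reaching {vmax umax : ℝ} (hvmax : 0 < vmax) (humax : 0 < umax)
    {v : Plane} (hv : ‖v‖ ≤ vmax) (p q : Plane) :
    ∃ T, 0 ≤ T ∧ ∃ x : ℝ → Plane, IsDITraj vmax umax x ∧ x 0 = p ∧ deriv x 0 = v ∧ x T = q := by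
  obtain ⟨C, hC⟩ := exists_norm_deriv_smoothTransition_le
  have hC0 : 0 ≤ C := (norm_nonneg _).trans (hC 0).1
  set T₁ := 1 + C * vmax / umax with hT₁_def
  set d := q - p - (T₁ * brake 1) • v with hd_def
  set T₂ := 1 + C * ‖d‖ / vmax + C * ‖d‖ / umax with hT₂_def
  have hvu : 0 ≤ C * vmax / umax := by positivity
  have hdv : 0 ≤ C * ‖d‖ / vmax := by positivity
  have hdu : 0 ≤ C * ‖d‖ / umax := by positivity
  have hT₁ : 0 < T₁ := by linarith
  have hT₂ : 1 ≤ T₂ := by linarith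
  have hv_acc : C * ‖v‖ ≤ umax * T₁ := calc
    C * ‖v‖ ≤ C * vmax := by gcongr
    _ ≤ umax * T₁ := (div_le_iff₀' humax).1 (by linarith)
  have hd_vel : C * ‖d‖ ≤ vmax * T₂ := (div_le_iff₀' hvmax).1 (by linarith)
  have hd_acc : C * ‖d‖ ≤ umax * (T₂ * T₂) := calc
    C * ‖d‖ ≤ umax * T₂ := (div_le_iff₀' humax).1 (by linarith)
    _ ≤ umax * (T₂ * T₂) := by gcongr; nlinarith
  refine ⟨T₁ + T₂, by linarith, brakeThenMove T₁ T₂ p v d,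
    ⟨contDiff_brakeThenMove.of_le (by norm_cast),
      norm_deriv_brakeThenMove_le (fun s => (hC s).1) hT₁ (by linarith) hv hd_vel,
      norm_deriv_deriv_brakeThenMove_le (fun s => (hC s).1) (fun s => (hC s).2) hT₁ (by linarith)
        hv_acc hd_acc⟩,
    brakeThenMove_zero hT₁.le (by linarith), deriv_brakeThenMove_zero hT₁ (by linarith), ?_⟩
  rw [brakeThenMove_add hT₁ (by linarith), hd_def]
  abel

theorem reachDI_subset_cthickening_segment {vmax umax t s : ℝ} (hvmax : 0 < vmax)
    (humax : 0 < umax) {p v : Plane} (hv : ‖v‖ ≤ vmax) (hts : t < s) :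
    reachDI vmax umax p v t ⊆ cthickening (umax * s ^ 2 / 2) (segment ℝ p (p + s • v)) := by
  intro q hq
  obtain ⟨T, ⟨hT, x, ⟨hx, -, hacc⟩, hx0, hxv, hxT⟩, hTs⟩ :=
    exists_lt_of_csInf_lt (exists_isDITraj_reaching hvmax humax hv p q) (hq.trans_lt hts)
  have hs : 0 < s := hT.trans_lt hTs
  refine mem_cthickening_of_dist_le q (p + T • v) _ _ ?_ ?_
  · rw [segment_eq_image']
    refine ⟨T / s, ⟨div_nonneg hT hs.le, div_le_one_of_le₀ hTs.le hs.le⟩, ?_⟩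
    dsimp only
    rw [add_sub_cancel_left, smul_smul, div_mul_cancel₀ _ hs.ne']
  · have htaylor := norm_sub_sub_smul_deriv_le (hx.differentiable two_ne_zero)
      hx.differentiable_deriv_two hacc hT
    rw [hx0, hxv, hxT] at htaylor
    rw [dist_eq_norm, ← sub_sub]
    exact htaylor.trans (by gcongr)

/-- upper bound on the area of the reachable set of a DI robot:
`Area(R_t(g)) ≤ 2 v₀ u_max t³ + u_max² t⁴` for every `t ≥ 0`. -/
theorem di_reachable_area_upper_bound
    (vmax umax v₀ : ℝ) (hvmax : 0 < vmax) (humax : 0 < umax)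
    (p v : Plane) (hv₀ : ‖v‖ = v₀) (hle : v₀ ≤ vmax)
    (t : ℝ) (ht : 0 ≤ t) :
    volume (reachDI vmax umax p v t) ≤
      ENNReal.ofReal (2 * v₀ * umax * t ^ 3 + umax ^ 2 * t ^ 4) := by
  have hv₀0 : 0 ≤ v₀ := hv₀ ▸ norm_nonneg v
  set F : ℝ → ℝ := fun s => (v₀ * s + umax * s ^ 2) * (umax * s ^ 2) with hF
  have hbound : ∀ s > t, volume (reachDI vmax umax p v t) ≤ ENNReal.ofReal (F s) := by
    intro s hs
    calc volume (reachDI vmax umax p v t)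
        ≤ volume (cthickening (umax * s ^ 2 / 2) (segment ℝ p (p + s • v))) :=
          measure_mono (reachDI_subset_cthickening_segment hvmax humax (hv₀ ▸ hle) hs)
      _ ≤ ENNReal.ofReal (dist p (p + s • v) + 2 * (umax * s ^ 2 / 2)) *
            ENNReal.ofReal (2 * (umax * s ^ 2 / 2)) ^ 1 :=
          volume_cthickening_segment_le finrank_euclideanSpace_fin _ _ (by positivity)
      _ = ENNReal.ofReal (F s) := by
          rw [pow_one, ← ENNReal.ofReal_mul (by positivity), dist_self_add_right, norm_smul,
            Real.norm_of_nonneg (ht.trans hs.le), hv₀, hF]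
          ring_nf
  have hF_cont : Tendsto (fun s => ENNReal.ofReal (F s)) (𝓝[>] t) (𝓝 (ENNReal.ofReal (F t))) :=
    ((ENNReal.continuous_ofReal.comp (by fun_prop)).tendsto t).mono_left nhdsWithin_le_nhds
  calc volume (reachDI vmax umax p v t) ≤ ENNReal.ofReal (F t) :=
        ge_of_tendsto hF_cont (eventually_nhdsWithin_of_forall hbound)
    _ ≤ _ := ENNReal.ofReal_le_ofReal (by
        simp only [hF]
        nlinarith [mul_nonneg (mul_nonneg hv₀0 humax.le) (pow_nonneg ht 3)])
end
end

section
/- Let Q ⊂ ℝ² be a square of area A > 0 and fix v_max > 0, u_max > 0. Let p* = (p*₁, …, p*_m) ∈ Q^m be any minimizer of H_m(·, Q) (an m-median configuration), so H_m(p*, Q) = H*_m(Q). Then the coverage cost of the Median Stationing algorithm for DI robots, T_MS^DI = (1/A) ∫_Q min_{1≤i≤m} τ_DI((p*_i, 0), q) dq, satisfies H*_m(Q)/v_max ≤ T_MS^DI ≤ H*_m(Q)/v_max + v_max/(2 u_max) + √(2 √(2A) / u_max). -/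
open MeasureTheory Filter Topology Real

noncomputable section

/-!
The lower bound holds pointwise: a trajectory of speed at most `vmax` needs time at least
`‖p - q‖ / vmax` to reach `q` from `p`. For the upper bound, a robot at rest is steered straight
towards `q` with an acceleration that is a parabolic bump of height `umax` (so that the trajectory
is `C²`), followed by cruising at the speed it reached. Choosing the duration of the bump according
to whether `vmax` can be reached before arrival gives
`τ_DI((p, 0), q) ≤ d / vmax + vmax / (2 umax) + √(2 d / umax)` with `d = ‖p - q‖`, and `d` is at
most the diameter `√(2A)` of the square. Integrating the two pointwise bounds needs measurability
of `q ↦ τ_DI((p, 0), q)`: its sublevel sets are convex, because slowing a trajectory down and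
taking convex combinations of trajectories that start at rest preserve the DI constraints.
-/

section Ramp

lemma hasDerivAt_max_zero_pow (n : ℕ) (t : ℝ) :
    HasDerivAt (fun s : ℝ => max s 0 ^ (n + 2)) ((n + 2 : ℕ) * max t 0 ^ (n + 1)) t := by
  rcases lt_trichotomy t 0 with ht | rfl | ht
  · have : (fun s : ℝ => max s 0 ^ (n + 2)) =ᶠ[𝓝 t] fun _ => 0 := by
      filter_upwards [Iio_mem_nhds ht] with s hs
      simp [max_eq_right (Set.mem_Iio.mp hs).le]
    simpa [max_eq_right ht.le] using (hasDerivAt_const t (0 : ℝ)).congr_of_eventuallyEq this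
  · rw [hasDerivAt_iff_isLittleO_nhds_zero]
    refine (Asymptotics.IsBigO.of_bound' (Eventually.of_forall fun h => ?_)).trans_isLittleO
      (Asymptotics.isLittleO_pow_id (by omega : 1 < n + 2))
    simp only [zero_add, max_self, zero_pow (Nat.succ_ne_zero _), mul_zero, smul_zero, sub_zero,
      norm_pow, Real.norm_eq_abs]
    refine pow_le_pow_left₀ (abs_nonneg _) ?_ _
    rw [abs_of_nonneg (le_max_right h 0)]
    exact max_le (le_abs_self h) (abs_nonneg h)
  · have : (fun s : ℝ => max s 0 ^ (n + 2)) =ᶠ[𝓝 t] fun s => s ^ (n + 2) := by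
      filter_upwards [Ioi_mem_nhds ht] with s hs
      simp [max_eq_left (Set.mem_Ioi.mp hs).le]
    simpa [max_eq_left ht.le] using (hasDerivAt_pow (n + 2) t).congr_of_eventuallyEq this

lemma hasDerivAt_max_sub_zero_pow (n : ℕ) (a t : ℝ) :
    HasDerivAt (fun s : ℝ => max (s - a) 0 ^ (n + 2))
      ((n + 2 : ℕ) * max (t - a) 0 ^ (n + 1)) t := by
  simpa using (hasDerivAt_max_zero_pow n (t - a)).comp_sub_const t a

/-- Distance covered from rest by a motion whose acceleration is the parabolic bump
`4u t (T - t) / T²` on `[0, T]` (peak `u`) and `0` elsewhere: after time `T` it has covered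
`uT²/3` and cruises at speed `2uT/3`. Writing it with the hinges `max t 0 ^ 3` makes it `C²`. -/
def rampPos (u T t : ℝ) : ℝ :=
  u / (3 * T ^ 2) * (max t 0 ^ 3 * (2 * T - t) + max (t - T) 0 ^ 3 * (t + T))

def rampVel (u T t : ℝ) : ℝ :=
  u / (3 * T ^ 2) * (3 * max t 0 ^ 2 * (2 * T - t) - max t 0 ^ 3
    + 3 * max (t - T) 0 ^ 2 * (t + T) + max (t - T) 0 ^ 3)

def rampAcc (u T t : ℝ) : ℝ :=
  u / (3 * T ^ 2) * (6 * max t 0 * (2 * T - t) - 6 * max t 0 ^ 2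
    + 6 * max (t - T) 0 * (t + T) + 6 * max (t - T) 0 ^ 2)

lemma hasDerivAt_rampPos (u T t : ℝ) : HasDerivAt (rampPos u T) (rampVel u T t) t := by
  have h := (((hasDerivAt_max_zero_pow 1 t).mul ((hasDerivAt_id t).const_sub (2 * T))).add
    ((hasDerivAt_max_sub_zero_pow 1 T t).mul ((hasDerivAt_id t).add_const T))).const_mul
      (u / (3 * T ^ 2))
  refine h.congr_deriv ?_
  simp only [rampVel, id]
  push_cast
  ring

lemma hasDerivAt_rampVel (u T t : ℝ) : HasDerivAt (rampVel u T) (rampAcc u T t) t := by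
  have h₁ := ((hasDerivAt_max_zero_pow 0 t).const_mul 3).mul ((hasDerivAt_id t).const_sub (2 * T))
  have h₂ := ((hasDerivAt_max_sub_zero_pow 0 T t).const_mul 3).mul ((hasDerivAt_id t).add_const T)
  have h := (((h₁.sub (hasDerivAt_max_zero_pow 1 t)).add h₂).add
    (hasDerivAt_max_sub_zero_pow 1 T t)).const_mul (u / (3 * T ^ 2))
  refine h.congr_deriv ?_
  simp only [rampAcc, id]
  push_cast
  ring

lemma continuous_rampAcc (u T : ℝ) : Continuous (rampAcc u T) := by
  unfold rampAcc
  fun_prop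

lemma contDiff_rampPos (u T : ℝ) : ContDiff ℝ 2 (rampPos u T) := by
  rw [show (2 : WithTop ℕ∞) = 0 + 1 + 1 from rfl, contDiff_succ_iff_deriv,
    funext fun t => (hasDerivAt_rampPos u T t).deriv, contDiff_succ_iff_deriv,
    funext fun t => (hasDerivAt_rampVel u T t).deriv, contDiff_zero]
  exact ⟨fun t => (hasDerivAt_rampPos u T t).differentiableAt, by simp,
    fun t => (hasDerivAt_rampVel u T t).differentiableAt, by simp, continuous_rampAcc u T⟩

variable {u T : ℝ}

lemma rampPos_zero (hT : 0 ≤ T) : rampPos u T 0 = 0 := by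
  simp [rampPos, hT]

lemma rampVel_zero (hT : 0 ≤ T) : rampVel u T 0 = 0 := by
  simp [rampVel, hT]

lemma rampPos_of_le (hT : 0 < T) {t : ℝ} (ht : T ≤ t) :
    rampPos u T t = u * T ^ 2 / 3 + 2 * u * T / 3 * (t - T) := by
  rw [rampPos, max_eq_left (by linarith), max_eq_left (by linarith)]
  field_simp
  ring

lemma rampVel_mem_Icc (hu : 0 ≤ u) (hT : 0 < T) (t : ℝ) :
    rampVel u T t ∈ Set.Icc 0 (2 * u * T / 3) := by
  have hc : 0 ≤ u / (3 * T ^ 2) := by positivity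
  have hmax : 2 * u * T / 3 = u / (3 * T ^ 2) * (2 * T ^ 3) := by field_simp
  rcases le_total t 0 with h0 | h0
  · rw [rampVel, max_eq_right h0, max_eq_right (by linarith)]
    constructor <;> nlinarith
  rcases le_total t T with h1 | h1
  · rw [rampVel, max_eq_left h0, max_eq_right (by linarith), hmax]
    constructor
    · exact mul_nonneg hc (by nlinarith [mul_nonneg (mul_nonneg h0 h0) (sub_nonneg.mpr h1)])
    · exact mul_le_mul_of_nonneg_left
        (by nlinarith [mul_nonneg (sq_nonneg (T - t)) (by linarith : (0 : ℝ) ≤ T + 2 * t)]) hc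
  · rw [rampVel, max_eq_left (by linarith), max_eq_left (by linarith), hmax]
    constructor
    · exact mul_nonneg hc (by nlinarith)
    · exact le_of_eq (by ring)

lemma abs_rampAcc_le (hu : 0 ≤ u) (hT : 0 < T) (t : ℝ) : |rampAcc u T t| ≤ u := by
  have hc : 0 ≤ u / (3 * T ^ 2) := by positivity
  rcases le_total t 0 with h0 | h0
  · rw [rampAcc, max_eq_right h0, max_eq_right (by linarith)]
    simpa using hu
  rcases le_total t T with h1 | h1
  · rw [rampAcc, max_eq_left h0, max_eq_right (by linarith), abs_of_nonneg (mul_nonneg hc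
      (by nlinarith [mul_nonneg h0 (sub_nonneg.mpr h1)]))]
    calc _ ≤ u / (3 * T ^ 2) * (3 * T ^ 2) :=
          mul_le_mul_of_nonneg_left (by nlinarith [sq_nonneg (T - 2 * t)]) hc
      _ = u := by field_simp
  · have h : rampAcc u T t = 0 := by
      rw [rampAcc, max_eq_left (by linarith), max_eq_left (by linarith)]
      ring
    simpa [h] using hu

end Ramp

section DITrajectory

variable {vmax umax : ℝ}

def diTimes (vmax umax : ℝ) (p v q : Plane) : Set ℝ :=
  {T | 0 ≤ T ∧ ∃ x : ℝ → Plane, IsDITraj vmax umax x ∧ x 0 = p ∧ deriv x 0 = v ∧ x T = q}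

lemma tauDI_eq_sInf_diTimes (p v q : Plane) :
    tauDI vmax umax p v q = sInf (diTimes vmax umax p v q) := rfl

lemma bddBelow_diTimes (p v q : Plane) : BddBelow (diTimes vmax umax p v q) :=
  ⟨0, fun _ hT => hT.1⟩

lemma tauDI_le_of_mem_diTimes {p v q : Plane} {T : ℝ} (hT : T ∈ diTimes vmax umax p v q) :
    tauDI vmax umax p v q ≤ T :=
  (tauDI_eq_sInf_diTimes p v q).trans_le (csInf_le (bddBelow_diTimes p v q) hT)

lemma tauDI_nonneg (p v q : Plane) : 0 ≤ tauDI vmax umax p v q := by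
  rw [tauDI_eq_sInf_diTimes]
  exact Real.sInf_nonneg fun _ hT => hT.1

lemma IsDITraj.norm_sub_le {x : ℝ → Plane} (hx : IsDITraj vmax umax x) (s t : ℝ) :
    ‖x t - x s‖ ≤ vmax * |t - s| := by
  simpa using convex_univ.norm_image_sub_le_of_norm_deriv_le
    (fun r _ => (hx.1.differentiable (by norm_num)).differentiableAt) (fun r _ => hx.2.1 r)
    (Set.mem_univ s) (Set.mem_univ t)

lemma norm_sub_div_le_tauDI (hv : 0 < vmax) {p v q : Plane}
    (hne : (diTimes vmax umax p v q).Nonempty) : ‖p - q‖ / vmax ≤ tauDI vmax umax p v q := by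
  rw [tauDI_eq_sInf_diTimes]
  refine le_csInf hne ?_
  rintro T ⟨hT, x, hx, rfl, -, rfl⟩
  rw [div_le_iff₀ hv, norm_sub_rev, mul_comm]
  simpa [abs_of_nonneg hT] using hx.norm_sub_le 0 T

lemma ramp_mem_diTimes (hu : 0 < umax) {T : ℝ} (hT : 0 < T) (hv : 2 * umax * T / 3 ≤ vmax)
    {p q : Plane} (hd : umax * T ^ 2 / 3 ≤ ‖p - q‖) :
    T + (‖p - q‖ - umax * T ^ 2 / 3) / (2 * umax * T / 3) ∈ diTimes vmax umax p 0 q := by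
  have hpq : q - p ≠ 0 := by
    rw [← norm_pos_iff, norm_sub_rev]
    exact lt_of_lt_of_le (by positivity) hd
  set e : Plane := ‖q - p‖⁻¹ • (q - p)
  have he : ‖e‖ = 1 := norm_smul_inv_norm hpq
  have hx' : deriv (fun t => p + rampPos umax T t • e) = fun t => rampVel umax T t • e :=
    funext fun t => ((hasDerivAt_rampPos umax T t).smul_const e).const_add p |>.deriv
  have hx'' : deriv (fun t => rampVel umax T t • e) = fun t => rampAcc umax T t • e :=
    funext fun t => ((hasDerivAt_rampVel umax T t).smul_const e).deriv
  have hTend : T ≤ T + (‖p - q‖ - umax * T ^ 2 / 3) / (2 * umax * T / 3) :=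
    le_add_of_nonneg_right (div_nonneg (by linarith) (by positivity))
  refine ⟨hT.le.trans hTend, fun t => p + rampPos umax T t • e, ⟨?_, fun t => ?_, fun t => ?_⟩,
    by simp [rampPos_zero hT.le], by simp [hx', rampVel_zero hT.le], ?_⟩
  · exact contDiff_const.add ((contDiff_rampPos umax T).smul contDiff_const)
  · rw [hx', norm_smul, he, mul_one, Real.norm_eq_abs,
      abs_of_nonneg (rampVel_mem_Icc hu.le hT t).1]
    exact (rampVel_mem_Icc hu.le hT t).2.trans hv
  · rw [hx', hx'', norm_smul, he, mul_one, Real.norm_eq_abs]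
    exact abs_rampAcc_le hu.le hT t
  · have hreach : rampPos umax T (T + (‖p - q‖ - umax * T ^ 2 / 3) / (2 * umax * T / 3))
        = ‖q - p‖ := by
      rw [rampPos_of_le hT hTend, norm_sub_rev]
      field_simp
      ring
    simp only [e, hreach, smul_smul, mul_inv_cancel₀ (norm_ne_zero_iff.mpr hpq), one_smul,
      add_sub_cancel]

lemma exists_mem_diTimes_le (hv : 0 < vmax) (hu : 0 < umax) (p q : Plane) :
    ∃ T ∈ diTimes vmax umax p 0 q,
      T ≤ ‖p - q‖ / vmax + vmax / (2 * umax) + √(2 * ‖p - q‖ / umax) := by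
  set d := ‖p - q‖
  rcases eq_or_ne p q with rfl | hpq
  · refine ⟨0, ⟨le_rfl, fun _ => p, ⟨contDiff_const, ?_, ?_⟩, rfl, ?_, rfl⟩, by positivity⟩ <;>
      simp [hv.le, hu.le]
  have hd : 0 < d := norm_pos_iff.mpr (sub_ne_zero.mpr hpq)
  have hamgm : √(2 * d / umax) ≤ d / vmax + vmax / (2 * umax) := by
    refine Real.sqrt_le_iff.mpr ⟨by positivity, ?_⟩
    have : 2 * d / umax = 4 * (d / vmax * (vmax / (2 * umax))) := by field_simp; ring
    nlinarith [sq_nonneg (d / vmax - vmax / (2 * umax))]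
  rcases le_total d (umax * (3 * vmax / (2 * umax)) ^ 2 / 3) with hshort | hlong
  · -- no cruising phase: the bump of duration `√(3 d / umax)` alone covers `d`
    set T := √(3 * d / umax)
    have hT2 : T ^ 2 = 3 * d / umax := Real.sq_sqrt (by positivity)
    have hTv : T ≤ 3 * vmax / (2 * umax) := by
      rw [← Real.sqrt_sq (by positivity : (0 : ℝ) ≤ 3 * vmax / (2 * umax))]
      exact Real.sqrt_le_sqrt (by field_simp at hshort ⊢; linarith)
    have hmem := ramp_mem_diTimes (vmax := vmax) hu (by positivity : 0 < T)
      (by rw [le_div_iff₀ (by positivity)] at hTv; linarith)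
      (le_of_eq (by rw [hT2]; field_simp) : umax * T ^ 2 / 3 ≤ d)
    refine ⟨_, hmem, ?_⟩
    have hT : T ≤ 2 * √(2 * d / umax) := by
      refine Real.sqrt_le_iff.mpr ⟨by positivity, ?_⟩
      rw [mul_pow, Real.sq_sqrt (by positivity)]
      field_simp
      nlinarith
    rw [hT2, show d - umax * (3 * d / umax) / 3 = 0 by field_simp; ring, zero_div, add_zero]
    linarith
  · -- the bump of duration `3 vmax / (2 umax)` reaches speed `vmax`, then cruise
    have hTv : 2 * umax * (3 * vmax / (2 * umax)) / 3 = vmax := by field_simp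
    refine ⟨_, ramp_mem_diTimes hu (by positivity) hTv.le hlong, ?_⟩
    have hdv : 3 * vmax ^ 2 ≤ 4 * umax * d := by
      rw [show umax * (3 * vmax / (2 * umax)) ^ 2 / 3 = 3 * vmax ^ 2 / (4 * umax) by
        field_simp; ring, div_le_iff₀ (by positivity)] at hlong
      linarith
    have hsmall : vmax / (4 * umax) ≤ √(2 * d / umax) := by
      refine Real.le_sqrt_of_sq_le ?_
      rw [div_pow, div_le_div_iff₀ (by positivity) hu]
      nlinarith [mul_pos hu hu]
    rw [hTv]
    calc 3 * vmax / (2 * umax) + (d - umax * (3 * vmax / (2 * umax)) ^ 2 / 3) / vmax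
        = d / vmax + vmax / (2 * umax) + vmax / (4 * umax) := by
          field_simp
          ring
      _ ≤ _ := by linarith

lemma tauDI_zero_le (hv : 0 < vmax) (hu : 0 < umax) (p q : Plane) :
    tauDI vmax umax p 0 q ≤ ‖p - q‖ / vmax + vmax / (2 * umax) + √(2 * ‖p - q‖ / umax) :=
  let ⟨_, hT, hle⟩ := exists_mem_diTimes_le hv hu p q
  (tauDI_le_of_mem_diTimes hT).trans hle

lemma diTimes_zero_nonempty (hv : 0 < vmax) (hu : 0 < umax) (p q : Plane) :
    (diTimes vmax umax p 0 q).Nonempty :=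
  let ⟨T, hT, _⟩ := exists_mem_diTimes_le hv hu p q
  ⟨T, hT⟩

lemma IsDITraj.comp_mul_left {x : ℝ → Plane} (hx : IsDITraj vmax umax x) {σ : ℝ}
    (hσ₀ : 0 ≤ σ) (hσ₁ : σ ≤ 1) : IsDITraj vmax umax (fun t => x (σ * t)) := by
  have hd : deriv (fun t => x (σ * t)) = σ • fun t => deriv x (σ * t) :=
    funext fun t => deriv_comp_mul_left σ x t
  have hdd : deriv (fun t => deriv x (σ * t)) = σ • fun t => deriv (deriv x) (σ * t) :=
    funext fun t => deriv_comp_mul_left σ (deriv x) t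
  refine ⟨hx.1.comp (contDiff_const.mul contDiff_id), fun t => ?_, fun t => ?_⟩
  · rw [hd, Pi.smul_apply, norm_smul, Real.norm_of_nonneg hσ₀]
    exact (mul_le_of_le_one_left (norm_nonneg _) hσ₁).trans (hx.2.1 _)
  · rw [hd, deriv_const_smul_field, hdd]
    simp only [Pi.smul_apply, norm_smul, Real.norm_of_nonneg hσ₀]
    exact (mul_le_of_le_one_left (by positivity) hσ₁).trans
      ((mul_le_of_le_one_left (norm_nonneg _) hσ₁).trans (hx.2.2 _))

lemma deriv_smul_add_smul {F : Type*} [NormedAddCommGroup F] [NormedSpace ℝ F] {x y : ℝ → F}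
    (hx : Differentiable ℝ x) (hy : Differentiable ℝ y) (a b : ℝ) :
    deriv (a • x + b • y) = a • deriv x + b • deriv y :=
  funext fun t => (((hx t).hasDerivAt.const_smul a).add ((hy t).hasDerivAt.const_smul b)).deriv

lemma IsDITraj.convex_combination {x y : ℝ → Plane} (hx : IsDITraj vmax umax x)
    (hy : IsDITraj vmax umax y) {a b : ℝ} (ha : 0 ≤ a) (hb : 0 ≤ b) (hab : a + b = 1) :
    IsDITraj vmax umax (a • x + b • y) := by
  have hball {w z : Plane} {C : ℝ} (hw : ‖w‖ ≤ C) (hz : ‖z‖ ≤ C) : ‖a • w + b • z‖ ≤ C := by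
    simpa using convex_closedBall (0 : Plane) C (by simpa using hw) (by simpa using hz) ha hb hab
  have hd := deriv_smul_add_smul (hx.1.differentiable (by norm_num))
    (hy.1.differentiable (by norm_num)) a b
  have hdd := deriv_smul_add_smul hx.1.differentiable_deriv_two hy.1.differentiable_deriv_two a b
  refine ⟨(contDiff_const.smul hx.1).add (contDiff_const.smul hy.1), fun t => ?_, fun t => ?_⟩
  · rw [hd]
    exact hball (hx.2.1 t) (hy.2.1 t)
  · rw [hd, hdd]
    exact hball (hx.2.2 t) (hy.2.2 t)

lemma convex_reachDI (hv : 0 < vmax) (hu : 0 < umax) (p : Plane) (c : ℝ) :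
    Convex ℝ (reachDI vmax umax p 0 c) := by
  intro q₁ hq₁ q₂ hq₂ a b ha hb hab
  show tauDI vmax umax p 0 (a • q₁ + b • q₂) ≤ c
  refine le_of_forall_pos_le_add fun ε hε => ?_
  have hcε : 0 < c + ε := by linarith [tauDI_nonneg (vmax := vmax) (umax := umax) p 0 q₁, hq₁.out]
  have hreach {q : Plane} (hq : q ∈ reachDI vmax umax p 0 c) :
      ∃ x : ℝ → Plane, IsDITraj vmax umax x ∧ x 0 = p ∧ deriv x 0 = 0 ∧ x (c + ε) = q := by
    obtain ⟨T, ⟨hT, x, hx, hx0, hdx0, hxT⟩, hTlt⟩ := (csInf_lt_iff (bddBelow_diTimes p 0 q)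
      (diTimes_zero_nonempty hv hu p q)).mp (lt_add_of_le_of_pos hq.out hε)
    -- slow `x` down so that it arrives at time `c + ε`
    refine ⟨fun t => x (T / (c + ε) * t), hx.comp_mul_left (by positivity)
      ((div_le_one hcε).mpr hTlt.le), by simpa using hx0, ?_, ?_⟩
    · simp [deriv_comp_mul_left, hdx0]
    · simpa [div_mul_cancel₀ _ hcε.ne'] using hxT
  obtain ⟨x₁, hx₁, hx₁0, hdx₁0, hx₁T⟩ := hreach hq₁
  obtain ⟨x₂, hx₂, hx₂0, hdx₂0, hx₂T⟩ := hreach hq₂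
  refine tauDI_le_of_mem_diTimes ⟨hcε.le, a • x₁ + b • x₂, hx₁.convex_combination hx₂ ha hb hab,
    ?_, ?_, by simp [hx₁T, hx₂T]⟩
  · simp [hx₁0, hx₂0, ← add_smul, hab]
  · rw [deriv_smul_add_smul (hx₁.1.differentiable (by norm_num))
      (hx₂.1.differentiable (by norm_num))]
    simp [hdx₁0, hdx₂0]

lemma aemeasurable_tauDI (hv : 0 < vmax) (hu : 0 < umax) (p : Plane) (μ : Measure Plane)
    [μ.IsAddHaarMeasure] : AEMeasurable (tauDI vmax umax p 0) μ :=
  NullMeasurable.aemeasurable <| measurable_of_Iic fun c =>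
    (convex_reachDI hv hu p c).nullMeasurableSet μ

end DITrajectory

section Rectangle

variable (b₁ b₂ a₁ a₂ : ℝ)

lemma rect_eq_preimage_pi :
    {q : Plane | q 0 ∈ Set.Icc b₁ (b₁ + a₁) ∧ q 1 ∈ Set.Icc b₂ (b₂ + a₂)} =
      (MeasurableEquiv.toLp 2 (Fin 2 → ℝ)).symm ⁻¹'
        Set.univ.pi fun i => Set.Icc (![b₁, b₂] i) (![b₁, b₂] i + ![a₁, a₂] i) := by
  ext q
  simp only [Set.mem_preimage, Set.mem_univ_pi, Fin.forall_fin_two]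
  rfl

lemma measurableSet_rect :
    MeasurableSet {q : Plane | q 0 ∈ Set.Icc b₁ (b₁ + a₁) ∧ q 1 ∈ Set.Icc b₂ (b₂ + a₂)} := by
  rw [rect_eq_preimage_pi]
  exact (MeasurableEquiv.toLp 2 (Fin 2 → ℝ)).symm.measurable
    (MeasurableSet.univ_pi fun _ => measurableSet_Icc)

lemma volume_rect (ha₁ : 0 ≤ a₁) :
    volume {q : Plane | q 0 ∈ Set.Icc b₁ (b₁ + a₁) ∧ q 1 ∈ Set.Icc b₂ (b₂ + a₂)} =
      ENNReal.ofReal (a₁ * a₂) := by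
  rw [rect_eq_preimage_pi, (EuclideanSpace.volume_preserving_symm_measurableEquiv_toLp
    (Fin 2)).measure_preimage (MeasurableSet.univ_pi fun _ => measurableSet_Icc).nullMeasurableSet,
    volume_pi_pi, Fin.prod_univ_two]
  simp [Real.volume_Icc, ENNReal.ofReal_mul ha₁]

variable {b₁ b₂ a₁ a₂} in
lemma norm_sub_le_of_mem_rect {q q' : Plane}
    (hq : q ∈ {q : Plane | q 0 ∈ Set.Icc b₁ (b₁ + a₁) ∧ q 1 ∈ Set.Icc b₂ (b₂ + a₂)})
    (hq' : q' ∈ {q : Plane | q 0 ∈ Set.Icc b₁ (b₁ + a₁) ∧ q 1 ∈ Set.Icc b₂ (b₂ + a₂)}) :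
    ‖q - q'‖ ≤ √(a₁ ^ 2 + a₂ ^ 2) := by
  obtain ⟨⟨h₀, h₀'⟩, h₁, h₁'⟩ := hq
  obtain ⟨⟨g₀, g₀'⟩, g₁, g₁'⟩ := hq'
  rw [EuclideanSpace.norm_eq, Fin.sum_univ_two, Real.norm_eq_abs, Real.norm_eq_abs, sq_abs, sq_abs]
  simp only [PiLp.sub_apply]
  refine Real.sqrt_le_sqrt (add_le_add ?_ ?_) <;> exact sq_le_sq' (by linarith) (by linarith)

end Rectangle

lemma iInf_le_of_forall_le_of_nonneg {ι : Type*} [Finite ι] {f : ι → ℝ} {D : ℝ} (hD : 0 ≤ D)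
    (h : ∀ i, f i ≤ D) : ⨅ i, f i ≤ D := by
  rcases isEmpty_or_nonempty ι with hι | ⟨⟨i⟩⟩
  · simpa using hD
  · exact (ciInf_le (Finite.bddBelow_range f) i).trans (h i)

section SetIntegral

variable {α : Type*} [MeasurableSpace α] {μ : Measure α} {s : Set α} {f g : α → ℝ}

lemma integrableOn_of_nonneg_of_le (hs : MeasurableSet s) (hμs : μ s ≠ ⊤) (hf : AEMeasurable f μ)
    (hf₀ : ∀ x, 0 ≤ f x) {C : ℝ} (hC : ∀ x ∈ s, f x ≤ C) : IntegrableOn f s μ :=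
  IntegrableOn.of_bound hμs.lt_top hf.restrict.aestronglyMeasurable C <|
    ae_restrict_of_forall_mem hs fun x hx => (Real.norm_of_nonneg (hf₀ x)).trans_le (hC x hx)

lemma setIntegral_div_le_setIntegral (hs : MeasurableSet s) (hf : IntegrableOn f s μ)
    (hg : IntegrableOn g s μ) {c : ℝ} (h : ∀ x ∈ s, f x / c ≤ g x) :
    (∫ x in s, f x ∂μ) / c ≤ ∫ x in s, g x ∂μ := by
  rw [← integral_div]
  exact setIntegral_mono_on (hf.div_const c) hg hs h

lemma setIntegral_le_setIntegral_add_const (hs : MeasurableSet s) (hμs : μ s ≠ ⊤)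
    (hf : IntegrableOn f s μ) (hg : IntegrableOn g s μ) {K : ℝ} (h : ∀ x ∈ s, g x ≤ f x + K) :
    ∫ x in s, g x ∂μ ≤ ∫ x in s, f x ∂μ + μ.real s * K := by
  rw [← smul_eq_mul, ← setIntegral_const, ← integral_add hf (integrableOn_const hμs)]
  exact setIntegral_mono_on hg (hf.add (integrableOn_const hμs)) hs h

end SetIntegral

section Stationing

variable {vmax umax : ℝ} {ι : Type*} [Finite ι]

lemma iInf_norm_sub_div_le_iInf_tauDI (hv : 0 < vmax) (hu : 0 < umax) (p : ι → Plane)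
    (q : Plane) : (⨅ i, ‖p i - q‖) / vmax ≤ ⨅ i, tauDI vmax umax (p i) 0 q := by
  rw [div_eq_mul_inv, Real.iInf_mul_of_nonneg (inv_nonneg.mpr hv.le)]
  refine ciInf_mono (Finite.bddBelow_range _) fun i => ?_
  simpa only [div_eq_mul_inv] using norm_sub_div_le_tauDI hv (diTimes_zero_nonempty hv hu (p i) q)

lemma iInf_tauDI_le (hv : 0 < vmax) (hu : 0 < umax) (p : ι → Plane) (q : Plane) {D : ℝ}
    (hD : ∀ i, ‖p i - q‖ ≤ D) :
    ⨅ i, tauDI vmax umax (p i) 0 q ≤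
      (⨅ i, ‖p i - q‖) / vmax + (vmax / (2 * umax) + √(2 * D / umax)) := by
  rcases isEmpty_or_nonempty ι with hι | hι
  · simp only [Real.iInf_of_isEmpty, zero_div, zero_add]
    positivity
  obtain ⟨i, hi⟩ := exists_eq_ciInf_of_finite (f := fun i => ‖p i - q‖)
  rw [← hi, ← add_assoc]
  refine (ciInf_le (Finite.bddBelow_range _) i).trans ((tauDI_zero_le hv hu _ _).trans ?_)
  gcongr
  exact hD i

theorem average_iInf_tauDI_bounds (hv : 0 < vmax) (hu : 0 < umax) {s : Set Plane}
    (hs : MeasurableSet s) {A : ℝ} (hA : 0 < A) (hsA : volume s = ENNReal.ofReal A)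
    (p : ι → Plane) {D : ℝ} (hD : 0 ≤ D) (hpD : ∀ q ∈ s, ∀ i, ‖p i - q‖ ≤ D) :
    (1 / A * ∫ q in s, ⨅ i, ‖p i - q‖) / vmax ≤ 1 / A * ∫ q in s, ⨅ i, tauDI vmax umax (p i) 0 q ∧
      1 / A * ∫ q in s, ⨅ i, tauDI vmax umax (p i) 0 q ≤
        (1 / A * ∫ q in s, ⨅ i, ‖p i - q‖) / vmax + vmax / (2 * umax) + √(2 * D / umax) := by
  have hs_fin : volume s ≠ ⊤ := hsA ▸ ENNReal.ofReal_ne_top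
  have hfD (q) (hq : q ∈ s) : ⨅ i, ‖p i - q‖ ≤ D := iInf_le_of_forall_le_of_nonneg hD (hpD q hq)
  have hup (q) (hq : q ∈ s) := iInf_tauDI_le hv hu p q (hpD q hq)
  have hf : IntegrableOn (fun q => ⨅ i, ‖p i - q‖) s :=
    integrableOn_of_nonneg_of_le hs hs_fin
      (AEMeasurable.iInf fun i => (continuous_const.sub continuous_id).norm.aemeasurable)
      (fun q => Real.iInf_nonneg fun i => norm_nonneg _) hfD
  have hgD (q) (hq : q ∈ s) :
      ⨅ i, tauDI vmax umax (p i) 0 q ≤ D / vmax + (vmax / (2 * umax) + √(2 * D / umax)) :=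
    (hup q hq).trans (by gcongr; exact hfD q hq)
  have hg : IntegrableOn (fun q => ⨅ i, tauDI vmax umax (p i) 0 q) s :=
    integrableOn_of_nonneg_of_le hs hs_fin
      (AEMeasurable.iInf fun i => aemeasurable_tauDI hv hu (p i) volume)
      (fun q => Real.iInf_nonneg fun i => tauDI_nonneg _ _ _) hgD
  constructor
  · rw [mul_div_assoc]
    exact mul_le_mul_of_nonneg_left (setIntegral_div_le_setIntegral hs hf hg
      fun q _ => iInf_norm_sub_div_le_iInf_tauDI hv hu p q) (by positivity)
  · have hint := setIntegral_le_setIntegral_add_const hs hs_fin (hf.div_const vmax) hg hup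
    rw [integral_div, measureReal_def, hsA, ENNReal.toReal_ofReal hA.le] at hint
    calc 1 / A * ∫ q in s, ⨅ i, tauDI vmax umax (p i) 0 q
        ≤ 1 / A * ((∫ q in s, ⨅ i, ‖p i - q‖) / vmax +
          A * (vmax / (2 * umax) + √(2 * D / umax))) := by gcongr
      _ = _ := by field_simp; ring

end Stationing

theorem di_median_stationing_bounds_general
    (vmax umax a : ℝ) (hvmax : 0 < vmax) (humax : 0 < umax) (ha : 0 < a) (b₁ b₂ : ℝ)
    (m : ℕ) (pstar : Fin m → Plane) :
    let A : ℝ := a ^ 2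
    let Q : Set Plane := {q | q 0 ∈ Set.Icc b₁ (b₁ + a) ∧ q 1 ∈ Set.Icc b₂ (b₂ + a)}
    let H : (Fin m → Plane) → ℝ := fun ps => (1 / A) * ∫ q in Q, ⨅ i, ‖ps i - q‖
    let TMS : ℝ := (1 / A) * ∫ q in Q, ⨅ i, tauDI vmax umax (pstar i) 0 q
    (∀ i, pstar i ∈ Q) →
    (∀ ps : Fin m → Plane, (∀ i, ps i ∈ Q) → H pstar ≤ H ps) →
    H pstar / vmax ≤ TMS ∧
      TMS ≤ H pstar / vmax + vmax / (2 * umax) +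
        Real.sqrt (2 * Real.sqrt (2 * A) / umax) := by
  intro A Q H TMS hmem _
  have hQvol : volume Q = ENNReal.ofReal A := by rw [volume_rect b₁ b₂ a a ha.le, ← sq]
  have hdiam (q) (hq : q ∈ Q) (i) : ‖pstar i - q‖ ≤ √(2 * A) :=
    (norm_sub_le_of_mem_rect (hmem i) hq).trans_eq (by rw [← two_mul])
  exact average_iInf_tauDI_bounds hvmax humax (measurableSet_rect b₁ b₂ a a) (by positivity)
    hQvol pstar (Real.sqrt_nonneg _) hdiam

/-- bounds on the coverage cost of the Median Stationing algorithm for DI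
robots in a square `Q` of area `A = a²`: if `p*` is an `m`-median configuration, then
`H*_m(Q)/v_max ≤ T_MS^DI ≤ H*_m(Q)/v_max + v_max/(2 u_max) + √(2√(2A)/u_max)`. -/
theorem di_median_stationing_bounds
    (vmax umax a : ℝ) (hvmax : 0 < vmax) (humax : 0 < umax) (ha : 0 < a) (b₁ b₂ : ℝ)
    (m : ℕ) (hm : 0 < m) (pstar : Fin m → Plane) :
    let A : ℝ := a ^ 2
    let Q : Set Plane := {q | q 0 ∈ Set.Icc b₁ (b₁ + a) ∧ q 1 ∈ Set.Icc b₂ (b₂ + a)}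
    let H : (Fin m → Plane) → ℝ := fun ps => (1 / A) * ∫ q in Q, ⨅ i, ‖ps i - q‖
    let TMS : ℝ := (1 / A) * ∫ q in Q, ⨅ i, tauDI vmax umax (pstar i) 0 q
    (∀ i, pstar i ∈ Q) →
    (∀ ps : Fin m → Plane, (∀ i, ps i ∈ Q) → H pstar ≤ H ps) →
    H pstar / vmax ≤ TMS ∧
      TMS ≤ H pstar / vmax + vmax / (2 * umax) +
        Real.sqrt (2 * Real.sqrt (2 * A) / umax) :=
  di_median_stationing_bounds_general vmax umax a hvmax humax ha b₁ b₂ m pstar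
end
end

section
/- For all real numbers ρ > 0 and w with 0 < w ≤ 2ρ, the following inequality holds: (4ρ/w) ∫₀^{w/2} arcsin(√(s/(2ρ))) ds ≤ (3/4) √(ρ w). -/
/-!
Since `sin` is concave on `[0, π]`, `arcsin` lies below its chord on `[0, sin (π / 4)]`:
`arcsin x ≤ (π / 4) / sin (π / 4) * x = π / (2√2) * x`. As `s ≤ w / 2 ≤ ρ`, the argument
`√(s / (2ρ))` stays in that range, and integrating the majorant exactly gives
`(π√2 / 6) √(ρw)`, with `π√2 / 6 ≈ 0.7405 < 3 / 4`.
-/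

open Real

theorem div_mul_sin_le_sin {a y : ℝ} (ha : a ≤ π) (hy₀ : 0 ≤ y) (hya : y ≤ a) :
    y / a * sin a ≤ sin y := by
  obtain rfl | ha₀ := (hy₀.trans hya).eq_or_lt
  · obtain rfl := le_antisymm hya hy₀
    simp
  have hratio : y / a ≤ 1 := div_le_one_of_le₀ hya ha₀.le
  simpa [div_mul_cancel₀ y ha₀.ne'] using
    strictConcaveOn_sin_Icc.concaveOn.2 ⟨le_rfl, pi_pos.le⟩ ⟨ha₀.le, ha⟩
      (sub_nonneg.2 hratio) (div_nonneg hy₀ ha₀.le) (sub_add_cancel 1 (y / a))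

theorem arcsin_le_div_sin_mul {a x : ℝ} (ha₀ : 0 < a) (ha : a ≤ π / 2) (hx₀ : 0 ≤ x)
    (hx : x ≤ sin a) : arcsin x ≤ a / sin a * x := by
  have hsin : 0 < sin a := sin_pos_of_pos_of_lt_pi ha₀ (by linarith [pi_pos])
  have harcsin_le : arcsin x ≤ a := by
    simpa [arcsin_sin (by linarith) ha] using monotone_arcsin hx
  have hchord := div_mul_sin_le_sin (by linarith) (arcsin_nonneg.2 hx₀) harcsin_le
  rw [sin_arcsin (by linarith) (hx.trans (sin_le_one a))] at hchord
  rw [div_mul_eq_mul_div, le_div_iff₀ hsin]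
  rw [div_mul_eq_mul_div, div_le_iff₀ ha₀] at hchord
  linarith

theorem integral_sqrt {b : ℝ} (hb : 0 ≤ b) : ∫ x in (0 : ℝ)..b, √x = 2 / 3 * b * √b := by
  simp_rw [sqrt_eq_rpow]
  rw [integral_rpow (Or.inl (by norm_num)), zero_rpow (by norm_num), rpow_add' hb (by norm_num),
    rpow_one]
  ring

theorem integral_sqrt_div {b c : ℝ} (hb : 0 ≤ b) (hc : 0 ≤ c) :
    ∫ x in (0 : ℝ)..b, √(x / c) = 2 / 3 * b * √(b / c) := by
  simp_rw [sqrt_div' _ hc]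
  rw [intervalIntegral.integral_div, integral_sqrt hb]
  ring

theorem two_thirds_mul_pi_div_four_div_sin_le : 2 / 3 * (π / 4 / sin (π / 4)) ≤ 3 / 4 := by
  have h2 : (1.41 : ℝ) ≤ √2 := le_sqrt_of_sq_le (by norm_num)
  rw [sin_pi_div_four, div_div_eq_mul_div, mul_div_assoc', div_le_iff₀ (by positivity)]
  nlinarith [pi_lt_d2]

/-- the estimate on the expected departure-arc length in the Strip
Loitering algorithm: for `0 < w ≤ 2ρ`,
`(4ρ/w) ∫₀^{w/2} arcsin(√(s/(2ρ))) ds ≤ (3/4) √(ρw)`. -/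
theorem strip_loitering_departure_arc_bound
    (ρ w : ℝ) (hρ : 0 < ρ) (hw : 0 < w) (hwρ : w ≤ 2 * ρ) :
    (4 * ρ / w) * ∫ s in (0 : ℝ)..(w / 2), Real.arcsin (Real.sqrt (s / (2 * ρ))) ≤
      (3 / 4) * Real.sqrt (ρ * w) := by
  set k := π / 4 / sin (π / 4)
  have hcont : Continuous fun s : ℝ => √(s / (2 * ρ)) := by fun_prop
  have hpointwise : ∀ s ∈ Set.Icc 0 (w / 2), arcsin √(s / (2 * ρ)) ≤ k * √(s / (2 * ρ)) := by
    intro s ⟨hs₀, hs⟩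
    refine arcsin_le_div_sin_mul (by positivity) (by linarith [pi_pos]) (sqrt_nonneg _) ?_
    rw [sin_pi_div_four, sqrt_le_iff, div_pow, sq_sqrt zero_le_two, div_le_iff₀ (by positivity)]
    exact ⟨by positivity, by linarith⟩
  calc (4 * ρ / w) * ∫ s in (0 : ℝ)..(w / 2), arcsin √(s / (2 * ρ))
      ≤ (4 * ρ / w) * ∫ s in (0 : ℝ)..(w / 2), k * √(s / (2 * ρ)) := by
        gcongr
        exact intervalIntegral.integral_mono_on (by positivity)
          ((continuous_arcsin.comp hcont).intervalIntegrable _ _)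
          ((continuous_const.mul hcont).intervalIntegrable _ _) hpointwise
    _ = 2 / 3 * k * √(ρ * w) := by
        rw [intervalIntegral.integral_const_mul, integral_sqrt_div (by positivity) (by positivity),
          show w / 2 / (2 * ρ) = ρ * w / (2 * ρ) ^ 2 by field_simp,
          sqrt_div' _ (by positivity), sqrt_sq (by positivity)]
        field_simp
        ring
    _ ≤ 3 / 4 * √(ρ * w) := by
        gcongr
        exact two_thirds_mul_pi_div_four_div_sin_le
end
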